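/- arXiv:math/0308028 — 5 statements merged into one kernel-verified Lean document; each statement's English description precedes it below -/
import Mathlib

section
/- For every real number r > 0 there exists a unique real number α with 0 < α < 1 such that F(1 − α) = r · F(α). -/
open Finset Filter Topology Set

/-- Ramanujan's hypergeometric series `F(α) = ∑ ((2n choose n)/4ⁿ)² αⁿ`. -/
noncomputable def F (α : ℝ) : ℝ :=
  ∑' n : ℕ, ((Nat.choose (2 * n) n : ℝ) / 4 ^ n) ^ 2 * α ^ n

namespace SingAux

noncomputable def c (n : ℕ) : ℝ := ((Nat.choose (2 * n) n : ℝ) / 4 ^ n) ^ 2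

lemma F_eq (α : ℝ) : F α = ∑' n : ℕ, c n * α ^ n := rfl

lemma c_nonneg (n : ℕ) : 0 ≤ c n := sq_nonneg _

lemma c_le_one (n : ℕ) : c n ≤ 1 := by
  have h : Nat.choose (2*n) n ≤ 2 ^ (2*n) := by
    calc Nat.choose (2*n) n ≤ ∑ m ∈ range (2*n+1), Nat.choose (2*n) m :=
          Finset.single_le_sum (fun i _ => Nat.zero_le _) (by simp; omega)
      _ = 2 ^ (2*n) := Nat.sum_range_choose _
  have h2 : ((Nat.choose (2*n) n : ℝ)) ≤ 4 ^ n := by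
    calc ((Nat.choose (2*n) n : ℝ)) ≤ (2:ℝ) ^ (2*n) := by exact_mod_cast h
      _ = 4 ^ n := by rw [pow_mul]; norm_num
  have h4 : (0:ℝ) < 4 ^ n := by positivity
  have : (Nat.choose (2*n) n : ℝ) / 4 ^ n ≤ 1 := by rw [div_le_one h4]; exact h2
  have h0 : 0 ≤ (Nat.choose (2*n) n : ℝ) / 4 ^ n := by positivity
  calc c n = ((Nat.choose (2*n) n : ℝ) / 4 ^ n) ^ 2 := rfl
    _ ≤ 1 ^ 2 := by apply pow_le_pow_left₀ h0 this
    _ = 1 := one_pow 2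

lemma c_one : c 1 = 1/4 := by
  simp [c, Nat.choose]
  norm_num

lemma summable_aux {α : ℝ} (h0 : 0 ≤ α) (h1 : α < 1) :
    Summable (fun n => c n * α ^ n) := by
  refine Summable.of_nonneg_of_le (fun n => mul_nonneg (c_nonneg n) (pow_nonneg h0 n))
    (fun n => ?_) (summable_geometric_of_lt_one h0 h1)
  calc c n * α ^ n ≤ 1 * α ^ n :=
        mul_le_mul_of_nonneg_right (c_le_one n) (pow_nonneg h0 n)
    _ = α ^ n := one_mul _

lemma F_strictMono {α β : ℝ} (h0 : 0 ≤ α) (hab : α < β) (h1 : β < 1) : F α < F β := by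
  rw [F_eq, F_eq]
  refine Summable.tsum_lt_tsum_of_nonneg (i := 1)
    (fun n => mul_nonneg (c_nonneg n) (pow_nonneg h0 n)) (fun n => ?_) ?_
    (summable_aux (h0.trans hab.le) h1)
  · exact mul_le_mul_of_nonneg_left (pow_le_pow_left₀ h0 hab.le n) (c_nonneg n)
  · have : (0:ℝ) < 1/4 := by norm_num
    simp only [pow_one, c_one]
    linarith

lemma F_le {α : ℝ} (h0 : 0 ≤ α) (h1 : α < 1) : F α ≤ (1 - α)⁻¹ := by
  rw [F_eq, ← tsum_geometric_of_lt_one h0 h1]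
  refine Summable.tsum_le_tsum (fun n => ?_) (summable_aux h0 h1) (summable_geometric_of_lt_one h0 h1)
  calc c n * α ^ n ≤ 1 * α ^ n :=
        mul_le_mul_of_nonneg_right (c_le_one n) (pow_nonneg h0 n)
    _ = α ^ n := one_mul _

lemma partial_le_F {α : ℝ} (h0 : 0 ≤ α) (h1 : α < 1) (N : ℕ) :
    ∑ n ∈ range N, c n * α ^ n ≤ F α := by
  rw [F_eq]
  exact Summable.sum_le_tsum (range N) (fun n _ => mul_nonneg (c_nonneg n) (pow_nonneg h0 n))
    (summable_aux h0 h1)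

/-- recurrence : c (n+1) = c n * ((2n+1)/(2n+2))^2 -/
lemma c_succ (n : ℕ) : c (n+1) = c n * ((2*(n:ℝ)+1)/(2*n+2))^2 := by
  have hN := Nat.succ_mul_centralBinom_succ n
  have hR : ((n:ℝ)+1) * (Nat.choose (2*(n+1)) (n+1) : ℝ)
      = 2 * (2*n+1) * (Nat.choose (2*n) n : ℝ) := by
    have := congrArg (fun k : ℕ => (k : ℝ)) hN
    simpa [Nat.centralBinom, Nat.succ_eq_add_one, mul_comm, mul_assoc, mul_left_comm]
      using this
  have h4 : (4:ℝ) ^ n ≠ 0 := by positivity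
  have hn1 : ((n:ℝ)+1) ≠ 0 := by positivity
  have hn2 : (2*(n:ℝ)+2) ≠ 0 := by positivity
  have hy : (Nat.choose (2*(n+1)) (n+1) : ℝ)
      = 2 * (2*n+1) * (Nat.choose (2*n) n : ℝ) / (n+1) := by
    field_simp
    linarith [hR]
  unfold c
  rw [hy]
  field_simp
  ring

lemma c_ge (n : ℕ) : 1 / (4 * ((n:ℝ)+1)) ≤ c (n+1) := by
  induction n with
  | zero => simp [c_one]
  | succ n ih =>
    rw [c_succ (n+1)]
    push_cast
    have key : 1 / (4*((n:ℝ)+1+1)) ≤ (1/(4*((n:ℝ)+1))) * ((2*((n:ℝ)+1)+1)/(2*((n:ℝ)+1)+2))^2 := by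
      rw [div_pow, div_mul_div_comm, one_mul,
        div_le_div_iff₀ (by positivity) (by positivity)]
      nlinarith [sq_nonneg ((n:ℝ)+1)]
    refine key.trans ?_
    exact mul_le_mul_of_nonneg_right ih (by positivity)

lemma exists_partial_gt (M : ℝ) : ∃ N, M < ∑ n ∈ range N, c n := by
  obtain ⟨N, hN⟩ := (Real.tendsto_sum_range_one_div_nat_succ_atTop.eventually_gt_atTop
    (4 * M)).exists
  refine ⟨N + 1, ?_⟩
  have h1 : ∑ i ∈ range N, (1 / ((i:ℝ)+1)) ≤ ∑ i ∈ range N, 4 * c (i+1) := by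
    refine Finset.sum_le_sum fun i _ => ?_
    have := c_ge i
    rw [div_le_iff₀ (by positivity)] at this ⊢
    nlinarith
  have h2 : ∑ i ∈ range N, 4 * c (i+1) = 4 * ∑ i ∈ range N, c (i+1) := by
    rw [Finset.mul_sum]
  have h3 : ∑ n ∈ range (N+1), c n = (∑ i ∈ range N, c (i+1)) + c 0 :=
    Finset.sum_range_succ' _ _
  have hc0 : 0 ≤ c 0 := c_nonneg 0
  nlinarith [hN, h1, h2]

lemma F_large (M : ℝ) : ∃ δ : ℝ, 0 < δ ∧ δ < 1/2 ∧ M < F (1 - δ) := by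
  obtain ⟨N, hN⟩ := exists_partial_gt (M + 1)
  set p : ℝ → ℝ := fun x => ∑ n ∈ range N, c n * x ^ n with hp
  have hpc : Continuous p := by
    apply continuous_finset_sum
    intro i _
    fun_prop
  have hp1 : p 1 = ∑ n ∈ range N, c n := by simp [hp]
  have htend : Tendsto p (𝓝[<] (1:ℝ)) (𝓝 (p 1)) :=
    (hpc.continuousAt.tendsto).mono_left nhdsWithin_le_nhds
  have hev : ∀ᶠ x in 𝓝[<] (1:ℝ), M < p x := by
    exact htend.eventually_const_lt (by rw [hp1]; linarith)
  have hev2 : ∀ᶠ x in 𝓝[<] (1:ℝ), (1/2:ℝ) < x := by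
    apply eventually_nhdsWithin_of_eventually_nhds
    exact eventually_gt_nhds (by norm_num)
  have hev3 : ∀ᶠ x in 𝓝[<] (1:ℝ), x < 1 := eventually_mem_nhdsWithin
  obtain ⟨x, hx1, hx2, hx3⟩ := (hev.and (hev2.and hev3)).exists
  refine ⟨1 - x, by linarith, by linarith, ?_⟩
  have hx0 : (0:ℝ) ≤ x := by linarith
  have : p x ≤ F x := partial_le_F hx0 hx3 N
  have hxx : 1 - (1 - x) = x := by ring
  rw [hxx]
  linarith

lemma F_contOn {b : ℝ} (hb0 : 0 ≤ b) (hb : b < 1) : ContinuousOn F (Icc 0 b) := by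
  have : ContinuousOn (fun x : ℝ => ∑' n : ℕ, c n * x ^ n) (Icc 0 b) := by
    refine continuousOn_tsum (u := fun n => b ^ n) (fun i => ?_)
      (summable_geometric_of_lt_one hb0 hb) (fun n x hx => ?_)
    · fun_prop
    · obtain ⟨hx0, hxb⟩ := hx
      rw [Real.norm_eq_abs, abs_of_nonneg (mul_nonneg (c_nonneg n) (pow_nonneg hx0 n))]
      calc c n * x ^ n ≤ 1 * x ^ n :=
            mul_le_mul_of_nonneg_right (c_le_one n) (pow_nonneg hx0 n)
        _ = x ^ n := one_mul _
        _ ≤ b ^ n := pow_le_pow_left₀ hx0 hxb n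
  exact this

end SingAux

open SingAux
theorem exists_unique_singular_modulus (r : ℝ) (hr : 0 < r) :
    ∃! α : ℝ, 0 < α ∧ α < 1 ∧ F (1 - α) = r * F α := by
  obtain ⟨δ, hδ0, hδ2, hδM⟩ := F_large (max (2*r + 1) (2/r + 1))
  have hδ1 : δ < 1 := by linarith
  have hb1 : (1:ℝ) - δ < 1 := by linarith
  have hb0 : (0:ℝ) ≤ 1 - δ := by linarith
  -- F δ ≤ 2
  have hFδ : F δ ≤ 2 := by
    have := F_le hδ0.le hδ1
    have h1 : (1 - δ)⁻¹ ≤ 2 := by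
      rw [inv_le_iff_one_le_mul₀ (by linarith)]
      linarith
    linarith
  have hh : ∀ x ∈ Icc δ (1-δ), (0:ℝ) ≤ x ∧ x ≤ 1 - δ := fun x hx => ⟨hδ0.le.trans hx.1, hx.2⟩
  set h : ℝ → ℝ := fun x => F (1 - x) - r * F x with hhdef
  have hcont : ContinuousOn h (Icc δ (1-δ)) := by
    apply ContinuousOn.sub
    · apply (F_contOn hb0 hb1).comp (by fun_prop)
      intro x hx
      exact ⟨by simp; linarith [hx.2], by simp; linarith [hx.1]⟩
    · exact ((F_contOn hb0 hb1).mono (fun x hx => ⟨(hh x hx).1, (hh x hx).2⟩)).const_smul r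
  have hab : δ ≤ 1 - δ := by linarith
  have hFδpos : 0 < F δ := by
    have : (1:ℝ) ≤ F δ := by
      have := partial_le_F hδ0.le hδ1 1
      simpa [c] using this
    linarith
  have hha : 0 < h δ := by
    have h1 : r * F δ ≤ 2 * r := by nlinarith
    have h2 : 2 * r < max (2*r + 1) (2/r + 1) := lt_of_lt_of_le (by linarith) (le_max_left _ _)
    simp only [hhdef]
    linarith
  have hhb : h (1 - δ) < 0 := by
    have h1 : 2 / r + 1 ≤ max (2*r + 1) (2/r + 1) := le_max_right _ _
    have h2 : 2 / r < F (1 - δ) := by linarith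
    have h3 : 2 < r * F (1 - δ) := by
      rw [div_lt_iff₀ hr] at h2
      nlinarith
    have h4 : F (1 - (1 - δ)) ≤ 2 := by rw [show 1 - (1-δ) = δ by ring]; exact hFδ
    simp only [hhdef]
    linarith
  have ivt := intermediate_value_Icc' hab hcont
  have h0mem : (0:ℝ) ∈ Icc (h (1-δ)) (h δ) := ⟨hhb.le, hha.le⟩
  obtain ⟨α, hαmem, hα0⟩ := ivt h0mem
  have hα1 : 0 < α := lt_of_lt_of_le hδ0 hαmem.1
  have hα2 : α < 1 := lt_of_le_of_lt hαmem.2 (by linarith)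
  have hαeq : F (1 - α) = r * F α := by
    simp only [hhdef] at hα0
    linarith [hα0]
  refine ⟨α, ⟨hα1, hα2, hαeq⟩, ?_⟩
  rintro β ⟨hβ1, hβ2, hβeq⟩
  by_contra hne
  have key : ∀ x y : ℝ, 0 < x → x < y → y < 1 →
      F (1 - x) = r * F x → F (1 - y) = r * F y → False := by
    intro x y hx hxy hy hxe hye
    have h1 : F (1 - y) < F (1 - x) := F_strictMono (by linarith) (by linarith) (by linarith)
    have h2 : F x < F y := F_strictMono hx.le hxy hy
    have h3 : r * F x < r * F y := by nlinarith
    linarith [hxe ▸ hye ▸ h3]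
  rcases lt_trichotomy β α with hlt | heq | hgt
  · exact key β α hβ1 hlt hα2 hβeq hαeq
  · exact hne heq
  · exact key α β hα1 hgt hβ2 hαeq hβeq
end

section
/- For every real number k with 0 ≤ k < 1, the complete elliptic integral of the first kind satisfies K(k) = (π/2) · ∑_{n=0}^∞ ((2n choose n)/4ⁿ)² k^{2n}; that is, K(k) = (π/2) · F(k²). -/
open Real

/-- Complete elliptic integral of the first kind. -/
noncomputable def K (k : ℝ) : ℝ :=
  ∫ θ in (0:ℝ)..(π / 2), 1 / Real.sqrt (1 - k ^ 2 * Real.sin θ ^ 2)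

/-!
Expand the integrand by the binomial series
`1 / √(1 - x) = ∑ ((2n choose n) / 4ⁿ) xⁿ` at `x = k² sin² θ`, and integrate term by term
(the terms are dominated by `k^(2n)`). Wallis' formula
`∫₀^{π/2} sin^(2n) θ dθ = (π / 2) (2n choose n) / 4ⁿ` then produces the second factor
`(2n choose n) / 4ⁿ` of each coefficient.
-/

open MeasureTheory

noncomputable def centralBinomRatio (n : ℕ) : ℝ := (Nat.choose (2 * n) n : ℝ) / 4 ^ n

lemma centralBinomRatio_nonneg (n : ℕ) : 0 ≤ centralBinomRatio n := by
  unfold centralBinomRatio; positivity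

lemma centralBinomRatio_le_one (n : ℕ) : centralBinomRatio n ≤ 1 := by
  rw [centralBinomRatio, div_le_one (by positivity), ← Nat.centralBinom_eq_two_mul_choose]
  exact_mod_cast Nat.centralBinom_le_four_pow n

lemma centralBinomRatio_succ (n : ℕ) :
    centralBinomRatio (n + 1) = (2 * n + 1) / (2 * n + 2) * centralBinomRatio n := by
  have h : ((n + 1 : ℕ) : ℝ) * (n + 1).centralBinom = 2 * (2 * n + 1) * n.centralBinom := by
    exact_mod_cast Nat.succ_mul_centralBinom_succ n
  simp only [centralBinomRatio, ← Nat.centralBinom_eq_two_mul_choose, pow_succ]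
  push_cast at h
  field_simp
  linear_combination 2 * h

lemma multichoose_one_half (n : ℕ) : Ring.multichoose (1 / 2 : ℝ) n = centralBinomRatio n := by
  rw [← mul_right_inj' (by positivity : (n.factorial : ℝ) ≠ 0), ← nsmul_eq_mul,
    Ring.factorial_nsmul_multichoose_eq_ascPochhammer, Polynomial.ascPochhammer_smeval_eq_eval]
  induction n with
  | zero => simp [centralBinomRatio]
  | succ n ih =>
    rw [ascPochhammer_succ_eval, ih, centralBinomRatio_succ, Nat.factorial_succ]
    push_cast
    field_simp
    ring

lemma hasSum_centralBinomRatio_mul_pow {x : ℝ} (hx : |x| < 1) :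
    HasSum (fun n => centralBinomRatio n * x ^ n) (1 / √(1 - x)) := by
  have := (one_div_one_sub_rpow_hasFPowerSeriesOnBall_zero (1 / 2)).hasSum
    (y := x) (by simpa [Metric.mem_eball, edist_dist, Real.dist_eq] using hx)
  simp only [FormalMultilinearSeries.ofScalars_apply_eq, ← Ring.multichoose_eq,
    multichoose_one_half, ← Real.sqrt_eq_rpow, zero_add, smul_eq_mul] at this
  exact this

lemma summable_abs_centralBinomRatio_mul_pow {x : ℝ} (hx : |x| < 1) :
    Summable fun n => |centralBinomRatio n * x ^ n| :=
  (summable_geometric_of_lt_one (abs_nonneg x) hx).of_nonneg_of_le (fun _ => abs_nonneg _)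
    fun n => by
      rw [abs_mul, abs_pow, abs_of_nonneg (centralBinomRatio_nonneg n)]
      exact mul_le_of_le_one_left (by positivity) (centralBinomRatio_le_one n)

lemma integral_sin_pow_two_mul (n : ℕ) :
    ∫ θ in (0:ℝ)..π / 2, sin θ ^ (2 * n) = π / 2 * centralBinomRatio n := by
  induction n with
  | zero => simp [centralBinomRatio]
  | succ n ih =>
    rw [mul_add_one, integral_sin_pow, ih, centralBinomRatio_succ]
    rw [sin_zero, cos_pi_div_two, zero_pow (by omega)]
    push_cast
    ring

lemma hasSum_integral_mul_sin_pow {b : ℕ → ℝ} (hb : Summable fun n => |b n|) :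
    HasSum (fun n => b n * (π / 2 * centralBinomRatio n))
      (∫ θ in (0:ℝ)..π / 2, ∑' n, b n * sin θ ^ (2 * n)) := by
  have hbound : ∀ n θ, ‖b n * sin θ ^ (2 * n)‖ ≤ |b n| := fun n θ => by
    rw [norm_mul, Real.norm_eq_abs, norm_pow, pow_mul, Real.norm_eq_abs]
    exact mul_le_of_le_one_right (abs_nonneg _)
      (pow_le_one₀ (by positivity) (by simpa using sin_sq_le_one θ))
  simp_rw [← integral_sin_pow_two_mul, ← intervalIntegral.integral_const_mul]
  refine intervalIntegral.hasSum_integral_of_dominated_convergence (fun n _ => |b n|)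
    (fun n => (by fun_prop : Continuous _).aestronglyMeasurable)
    (fun n => ae_of_all _ fun θ _ => hbound n θ) (ae_of_all _ fun _ _ => hb)
    intervalIntegrable_const (ae_of_all _ fun θ _ => ?_)
  exact (hb.of_norm_bounded (hbound · θ)).hasSum

theorem ellipticK_eq_series (k : ℝ) (h0 : 0 ≤ k) (h1 : k < 1) :
    K k = π / 2 * ∑' n : ℕ, ((Nat.choose (2 * n) n : ℝ) / 4 ^ n) ^ 2 * k ^ (2 * n) ∧
    K k = π / 2 * F (k ^ 2) := by
  have hk : k ^ 2 < 1 := by nlinarith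
  have hexpand : ∀ θ, HasSum (fun n => centralBinomRatio n * (k ^ 2) ^ n * sin θ ^ (2 * n))
      (1 / √(1 - k ^ 2 * sin θ ^ 2)) := fun θ => by
    have hx : |k ^ 2 * sin θ ^ 2| < 1 := by
      rw [abs_of_nonneg (by positivity)]
      nlinarith [sin_sq_le_one θ]
    simpa only [mul_pow, ← pow_mul, mul_assoc] using hasSum_centralBinomRatio_mul_pow hx
  have hK : K k = π / 2 * ∑' n, centralBinomRatio n ^ 2 * (k ^ 2) ^ n :=
    calc K k
        = ∫ θ in (0:ℝ)..π / 2,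
            ∑' n, centralBinomRatio n * (k ^ 2) ^ n * sin θ ^ (2 * n) := by
          simp_rw [K, (hexpand _).tsum_eq]
      _ = ∑' n, centralBinomRatio n * (k ^ 2) ^ n * (π / 2 * centralBinomRatio n) :=
          (hasSum_integral_mul_sin_pow (summable_abs_centralBinomRatio_mul_pow
            (by rwa [abs_of_nonneg (sq_nonneg k)]))).tsum_eq.symm
      _ = π / 2 * ∑' n, centralBinomRatio n ^ 2 * (k ^ 2) ^ n := by
          rw [← tsum_mul_left]
          exact tsum_congr fun n => by ring
  exact ⟨by simp_rw [hK, pow_mul, centralBinomRatio], hK⟩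
end

section
/- Landen's transformation: for every real number k with 0 < k < 1, setting l := 2√k/(1 + k) one has K(k) = (1/(1 + k)) · K(l) and K(√(1 − k²)) = (2/(1 + k)) · K((1 − k)/(1 + k)), where (1 − k)/(1 + k) = √(1 − l²). -/
open Real

/-!
Landen's substitution `sin φ = (1 + k) sin θ / (1 + k sin² θ)` maps `[0, π/2]` onto itself, and for
`l = 2√k / (1 + k)` it satisfies `√(1 - l² sin² φ) = (1 - k sin² θ) / (1 + k sin² θ)` and
`dφ/dθ = (1 + k)(1 - k sin² θ) / ((1 + k sin² θ) √(1 - k² sin² θ))`. Hence it turns the integrand of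
`K l` into `1 + k` times that of `K k`. The second identity is the first one for the modulus
`(1 - k) / (1 + k)`, whose Landen modulus is `√(1 - k²)`.
-/

section

variable {k : ℝ}

noncomputable def landenModulus (k : ℝ) : ℝ := 2 * √k / (1 + k)

noncomputable def landenRatio (k s : ℝ) : ℝ := (1 + k) * s / (1 + k * s ^ 2)

noncomputable def landenAngle (k θ : ℝ) : ℝ := arcsin (landenRatio k (sin θ))

lemma one_sub_sq_mul_sin_sq_pos (hk : k ^ 2 < 1) (θ : ℝ) : 0 < 1 - k ^ 2 * sin θ ^ 2 := by
  nlinarith [sin_sq_le_one θ, sq_nonneg k]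

lemma continuous_ellipticIntegrand (hk : k ^ 2 < 1) :
    Continuous fun θ => 1 / √(1 - k ^ 2 * sin θ ^ 2) :=
  continuous_const.div (by fun_prop) fun θ => (sqrt_pos.2 (one_sub_sq_mul_sin_sq_pos hk θ)).ne'

lemma landenModulus_sq (hk : 0 ≤ k) : landenModulus k ^ 2 = 4 * k / (1 + k) ^ 2 := by
  rw [landenModulus, div_pow, mul_pow, sq_sqrt hk]
  norm_num

lemma landenModulus_sq_lt_one (hk0 : 0 ≤ k) (hk1 : k < 1) : landenModulus k ^ 2 < 1 := by
  rw [landenModulus_sq hk0, div_lt_one (by positivity)]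
  nlinarith

lemma sqrt_one_sub_landenModulus_sq (hk0 : 0 ≤ k) (hk1 : k ≤ 1) :
    √(1 - landenModulus k ^ 2) = (1 - k) / (1 + k) := by
  have hk : 0 < 1 + k := by linarith
  rw [landenModulus_sq hk0, sqrt_eq_iff_eq_sq _ (div_nonneg (by linarith) hk.le)]
  · field_simp
    ring
  · rw [sub_nonneg, div_le_one (by positivity)]
    nlinarith

lemma landenModulus_one_sub_div_one_add (hk0 : -1 < k) (hk1 : k ≤ 1) :
    landenModulus ((1 - k) / (1 + k)) = √(1 - k ^ 2) := by
  have hk : 0 < 1 + k := by linarith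
  have hk' : 0 ≤ (1 - k) / (1 + k) := div_nonneg (by linarith) hk.le
  rw [eq_comm, sqrt_eq_iff_eq_sq (by nlinarith) (by unfold landenModulus; positivity),
    landenModulus_sq hk']
  field_simp
  ring

lemma one_add_mul_sq_pos (hk : 0 ≤ k) (s : ℝ) : 0 < 1 + k * s ^ 2 := by positivity

lemma one_sub_landenRatio_sq (hk : 0 ≤ k) (s : ℝ) :
    1 - landenRatio k s ^ 2 = (1 - s ^ 2) * (1 - k ^ 2 * s ^ 2) / (1 + k * s ^ 2) ^ 2 := by
  have := (one_add_mul_sq_pos hk s).ne'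
  unfold landenRatio
  field_simp
  ring

lemma landenRatio_sq_le_one (hk0 : 0 ≤ k) (hk1 : k ≤ 1) {s : ℝ} (hs : s ^ 2 ≤ 1) :
    landenRatio k s ^ 2 ≤ 1 := by
  have : 0 ≤ 1 - landenRatio k s ^ 2 := by
    rw [one_sub_landenRatio_sq hk0]
    have : k ^ 2 * s ^ 2 ≤ 1 := by nlinarith [sq_nonneg k, sq_nonneg s]
    exact div_nonneg (mul_nonneg (by linarith) (by linarith)) (sq_nonneg _)
  linarith

lemma one_sub_landenModulus_sq_mul_landenRatio_sq (hk : 0 ≤ k) (s : ℝ) :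
    1 - landenModulus k ^ 2 * landenRatio k s ^ 2 = ((1 - k * s ^ 2) / (1 + k * s ^ 2)) ^ 2 := by
  have := (one_add_mul_sq_pos hk s).ne'
  have : 1 + k ≠ 0 := by positivity
  rw [landenModulus_sq hk, landenRatio]
  field_simp
  ring

lemma hasDerivAt_landenRatio (hk : 0 ≤ k) (s : ℝ) :
    HasDerivAt (landenRatio k) ((1 + k) * (1 - k * s ^ 2) / (1 + k * s ^ 2) ^ 2) s := by
  have hnum := (hasDerivAt_id s).const_mul (1 + k)
  have hden := ((hasDerivAt_pow 2 s).const_mul k).const_add 1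
  have : HasDerivAt (landenRatio k) _ s := hnum.div hden (one_add_mul_sq_pos hk s).ne'
  refine this.congr_deriv ?_
  simp only [id]
  ring

lemma sin_landenAngle (hk0 : 0 ≤ k) (hk1 : k ≤ 1) (θ : ℝ) :
    sin (landenAngle k θ) = landenRatio k (sin θ) := by
  obtain ⟨hneg, hpos⟩ := abs_le.1 <| abs_le_one_iff_mul_self_le_one.2 <| by
    simpa only [sq] using landenRatio_sq_le_one hk0 hk1 (sin_sq_le_one θ)
  exact sin_arcsin hneg hpos

lemma landenAngle_zero : landenAngle k 0 = 0 := by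
  simp [landenAngle, landenRatio]

lemma landenAngle_pi_div_two (hk : 0 ≤ k) : landenAngle k (π / 2) = π / 2 := by
  have : 1 + k ≠ 0 := by positivity
  simp [landenAngle, landenRatio, this]

lemma continuous_landenAngle (hk : 0 ≤ k) : Continuous (landenAngle k) :=
  continuous_arcsin.comp <| (continuous_const.mul continuous_sin).div (by fun_prop)
    fun θ => (one_add_mul_sq_pos hk _).ne'

lemma hasDerivAt_landenAngle (hk0 : 0 ≤ k) (hk1 : k ≤ 1) {θ : ℝ} (hθ : 0 < cos θ) :
    HasDerivAt (landenAngle k)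
      ((1 + k) * (1 - k * sin θ ^ 2) / ((1 + k * sin θ ^ 2) * √(1 - k ^ 2 * sin θ ^ 2))) θ := by
  have hks : 0 < 1 - k ^ 2 * sin θ ^ 2 := by
    have hs : sin θ ^ 2 < 1 := by nlinarith [sin_sq_add_cos_sq θ]
    have hk : k ^ 2 ≤ 1 := by nlinarith
    nlinarith [mul_le_mul_of_nonneg_right hk (sq_nonneg (sin θ))]
  have hpos := one_add_mul_sq_pos hk0 (sin θ)
  have hsqrt : √(1 - landenRatio k (sin θ) ^ 2) =
      cos θ * √(1 - k ^ 2 * sin θ ^ 2) / (1 + k * sin θ ^ 2) := by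
    rw [one_sub_landenRatio_sq hk0, ← cos_sq', ← sq_sqrt hks.le, ← mul_pow, ← div_pow,
      sqrt_sq (by positivity), sq_sqrt hks.le]
  have hr : |landenRatio k (sin θ)| < 1 := by
    rw [← sq_lt_one_iff_abs_lt_one, ← sub_pos, ← sqrt_pos, hsqrt]
    positivity
  have : HasDerivAt (landenAngle k) _ θ :=
    (hasDerivAt_arcsin (abs_lt.1 hr).1.ne' (abs_lt.1 hr).2.ne).comp θ
      ((hasDerivAt_landenRatio hk0 (sin θ)).comp θ (hasDerivAt_sin θ))
  refine this.congr_deriv ?_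
  rw [hsqrt]
  field_simp

lemma sqrt_one_sub_landenModulus_sq_mul_sin_landenAngle_sq (hk0 : 0 ≤ k) (hk1 : k ≤ 1) (θ : ℝ) :
    √(1 - landenModulus k ^ 2 * sin (landenAngle k θ) ^ 2) =
      (1 - k * sin θ ^ 2) / (1 + k * sin θ ^ 2) := by
  rw [sin_landenAngle hk0 hk1, one_sub_landenModulus_sq_mul_landenRatio_sq hk0, sqrt_sq]
  have : k * sin θ ^ 2 ≤ 1 := by nlinarith [sin_sq_le_one θ, sq_nonneg (sin θ)]
  exact div_nonneg (by linarith) (one_add_mul_sq_pos hk0 _).le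

theorem K_landenModulus (hk0 : 0 ≤ k) (hk1 : k < 1) : K (landenModulus k) = (1 + k) * K k := by
  have hk2 : k ^ 2 < 1 := by nlinarith
  have hF : Continuous fun θ =>
      (1 + k) * (1 - k * sin θ ^ 2) / ((1 + k * sin θ ^ 2) * √(1 - k ^ 2 * sin θ ^ 2)) :=
    (by fun_prop : Continuous _).div (by fun_prop) fun θ =>
      (mul_pos (one_add_mul_sq_pos hk0 _) (sqrt_pos.2 (one_sub_sq_mul_sin_sq_pos hk2 θ))).ne'
  -- `landenAngle k` is not differentiable at `π / 2`, where the argument of `arcsin` reaches `1`.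
  have hsubst := intervalIntegral.integral_comp_mul_deriv'' (a := 0) (b := π / 2)
    (continuous_landenAngle hk0).continuousOn
    (fun θ hθ => by
      rw [min_eq_left pi_div_two_pos.le, max_eq_right pi_div_two_pos.le] at hθ
      exact (hasDerivAt_landenAngle hk0 hk1.le
        (cos_pos_of_mem_Ioo ⟨by linarith [hθ.1, pi_pos], hθ.2⟩)).hasDerivWithinAt)
    hF.continuousOn
    (continuous_ellipticIntegrand (landenModulus_sq_lt_one hk0 hk1)).continuousOn
  rw [landenAngle_zero, landenAngle_pi_div_two hk0] at hsubst
  rw [K, ← hsubst, K, ← intervalIntegral.integral_const_mul]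
  refine intervalIntegral.integral_congr fun θ _ => ?_
  have := (one_add_mul_sq_pos hk0 (sin θ)).ne'
  have : 1 - k * sin θ ^ 2 ≠ 0 := by nlinarith [sin_sq_le_one θ]
  have := (sqrt_pos.2 (one_sub_sq_mul_sin_sq_pos hk2 θ)).ne'
  simp only [Function.comp_apply, sqrt_one_sub_landenModulus_sq_mul_sin_landenAngle_sq hk0 hk1.le]
  field_simp

end

theorem landen_transformation (k : ℝ) (h0 : 0 < k) (h1 : k < 1)
    (l : ℝ) (hl : l = 2 * Real.sqrt k / (1 + k)) :
    K k = 1 / (1 + k) * K l ∧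
    K (Real.sqrt (1 - k ^ 2)) = 2 / (1 + k) * K ((1 - k) / (1 + k)) ∧
    (1 - k) / (1 + k) = Real.sqrt (1 - l ^ 2) := by
  obtain rfl : l = landenModulus k := hl
  have hk : 0 < 1 + k := by linarith
  have hk'0 : 0 ≤ (1 - k) / (1 + k) := div_nonneg (by linarith) hk.le
  have hk'1 : (1 - k) / (1 + k) < 1 := by rw [div_lt_one hk]; linarith
  refine ⟨?_, ?_, (sqrt_one_sub_landenModulus_sq h0.le h1.le).symm⟩
  · rw [K_landenModulus h0.le h1]
    field_simp
  · rw [← landenModulus_one_sub_div_one_add (by linarith) h1.le, K_landenModulus hk'0 hk'1]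
    congr 1
    field_simp
    ring
end

section
/- Let α be a real number with 0 < α < 1 satisfying F(1 − α) = √3 · F(α). Then α = (2 − √3)/4. -/
open Set Filter Topology

section PowerSeries

def derivCoeff (a : ℕ → ℝ) (n : ℕ) : ℝ := (n + 1) * a (n + 1)

/-- The rising factorial `(n + 1) ⋯ (n + k)` is the polynomial bound that is stable under
termwise differentiation. -/
def GrowthBound (a : ℕ → ℝ) (C : ℝ) (k : ℕ) : Prop :=
  ∀ n, |a n| ≤ C * (n + k).descFactorial k

variable {a : ℕ → ℝ} {C : ℝ} {k : ℕ}

lemma growthBound_derivCoeff (ha : GrowthBound a C k) : GrowthBound (derivCoeff a) C (k + 1) := by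
  intro n
  have hfac : ((n + (k + 1)).descFactorial (k + 1) : ℝ)
      = (n + 1) * (n + 1 + k).descFactorial k := by
    rw [Nat.descFactorial_succ, show n + (k + 1) - k = n + 1 by omega, ← add_assoc, add_right_comm]
    push_cast; ring
  rw [derivCoeff, abs_mul, abs_of_pos (by positivity), hfac, mul_left_comm]
  gcongr
  exact_mod_cast ha (n + 1)

lemma GrowthBound.summable_mul_pow (ha : GrowthBound a C k) {x : ℝ}
    (hx : |x| < 1) : Summable fun n ↦ a n * x ^ n := by
  refine .of_norm_bounded ((summable_descFactorial_mul_geometric_of_norm_lt_one k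
    (r := |x|) (by rwa [Real.norm_eq_abs, abs_abs])).mul_left C) fun n ↦ ?_
  rw [Real.norm_eq_abs, abs_mul, abs_pow, ← mul_assoc]
  gcongr
  exact ha n

lemma GrowthBound.hasDerivAt_tsum_mul_pow (ha : GrowthBound a C k) {x : ℝ}
    (hx : |x| < 1) :
    HasDerivAt (fun y ↦ ∑' n, a n * y ^ n) (∑' n, derivCoeff a n * x ^ n) x := by
  obtain ⟨r, hxr, hr1⟩ := exists_between hx
  have hr : |r| < 1 := by rwa [abs_of_nonneg ((abs_nonneg x).trans hxr.le)]
  have hmem : x ∈ Ioo (-r) r := abs_lt.1 hxr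
  have htail : HasDerivAt (fun y ↦ ∑' n, a (n + 1) * y ^ (n + 1))
      (∑' n, derivCoeff a n * x ^ n) x := by
    refine hasDerivAt_tsum_of_isPreconnected (g := fun n y ↦ a (n + 1) * y ^ (n + 1))
      (g' := fun n y ↦ derivCoeff a n * y ^ n)
      ((summable_descFactorial_mul_geometric_of_norm_lt_one (k + 1) hr).mul_left C) isOpen_Ioo
      isPreconnected_Ioo (fun n y _ ↦ ?_) (fun n y hy ↦ ?_) hmem ?_ hmem
    · refine ((hasDerivAt_pow (n + 1) y).const_mul (a (n + 1))).congr_deriv ?_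
      simp only [derivCoeff, Nat.add_sub_cancel, Nat.cast_add, Nat.cast_one]; ring
    · rw [Real.norm_eq_abs, abs_mul, abs_pow, ← mul_assoc]
      have hyr : |y| ≤ r := abs_le.2 ⟨hy.1.le, hy.2.le⟩
      have hd := growthBound_derivCoeff ha n
      exact mul_le_mul hd (pow_le_pow_left₀ (abs_nonneg y) hyr n) (by positivity)
        ((abs_nonneg _).trans hd)
    · exact (summable_nat_add_iff 1).2 (ha.summable_mul_pow hx)
  refine (htail.const_add (a 0)).congr_of_eventuallyEq ?_
  filter_upwards [(isOpen_lt continuous_abs continuous_const).mem_nhds hx] with y hy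
  simp [(ha.summable_mul_pow hy).tsum_eq_zero_add]

lemma GrowthBound.tsum_mul_pow_eq_mul_tsum (ha : GrowthBound a C k) (h0 : a 0 = 0)
    {x : ℝ} (hx : |x| < 1) : ∑' n, a n * x ^ n = x * ∑' n, a (n + 1) * x ^ n := by
  rw [(ha.summable_mul_pow hx).tsum_eq_zero_add, ← tsum_mul_left]
  simp [h0, pow_succ', mul_comm, mul_assoc]

end PowerSeries

lemma abs_lt_one_of_mem_Ico {x : ℝ} (hx : x ∈ Ico (0 : ℝ) 1) : |x| < 1 := by
  rw [abs_of_nonneg hx.1]; exact hx.2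

noncomputable def coeffF (n : ℕ) : ℝ := ((Nat.choose (2 * n) n : ℝ) / 4 ^ n) ^ 2

lemma F_eq_tsum (x : ℝ) : F x = ∑' n, coeffF n * x ^ n := rfl

lemma coeffF_pos (n : ℕ) : 0 < coeffF n := by
  have : 0 < (Nat.choose (2 * n) n : ℝ) := by exact_mod_cast Nat.choose_pos (by omega)
  unfold coeffF
  positivity

lemma coeffF_le_one (n : ℕ) : coeffF n ≤ 1 := by
  have h : (Nat.choose (2 * n) n : ℝ) ≤ 4 ^ n := by exact_mod_cast Nat.centralBinom_le_four_pow n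
  rw [coeffF, sq_le_one_iff₀ (by positivity), div_le_one (by positivity)]
  exact h

lemma coeffF_succ (n : ℕ) :
    4 * ((n : ℝ) + 1) ^ 2 * coeffF (n + 1) = (2 * n + 1) ^ 2 * coeffF n := by
  have h : ((n : ℝ) + 1) * (Nat.choose (2 * (n + 1)) (n + 1) : ℝ)
      = 2 * (2 * n + 1) * (Nat.choose (2 * n) n : ℝ) := by
    exact_mod_cast Nat.succ_mul_centralBinom_succ n
  rw [coeffF, coeffF, div_pow, div_pow, pow_succ (4 : ℝ) n]
  field_simp
  linear_combination (((n : ℝ) + 1) * (Nat.choose (2 * (n + 1)) (n + 1) : ℝ)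
    + 2 * (2 * n + 1) * (Nat.choose (2 * n) n : ℝ)) * h

lemma growthBound_coeffF : GrowthBound coeffF 1 0 := fun n ↦ by
  simpa [abs_of_pos (coeffF_pos n)] using coeffF_le_one n

noncomputable def derivF (x : ℝ) : ℝ := ∑' n, derivCoeff coeffF n * x ^ n

lemma hasDerivAt_F {x : ℝ} (hx : |x| < 1) : HasDerivAt F (derivF x) x :=
  growthBound_coeffF.hasDerivAt_tsum_mul_pow hx

/-- The Taylor coefficients of `x (1 - x) F'(x)`. -/
noncomputable def coeffWeightedDerivF : ℕ → ℝ
  | 0 => 0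
  | n + 1 => derivCoeff coeffF n - n * coeffF n

lemma growthBound_coeffWeightedDerivF : GrowthBound coeffWeightedDerivF 2 1 := by
  rintro (_ | n)
  · simp [coeffWeightedDerivF]
  · have h1 := coeffF_le_one (n + 1)
    have h2 := coeffF_le_one n
    have h3 := coeffF_pos (n + 1)
    have h4 := coeffF_pos n
    simp only [coeffWeightedDerivF, derivCoeff, Nat.descFactorial_one]
    push_cast
    rw [abs_le]
    constructor <;> nlinarith

lemma derivCoeff_coeffWeightedDerivF (n : ℕ) :
    derivCoeff coeffWeightedDerivF n = coeffF n / 4 := by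
  simp only [derivCoeff, coeffWeightedDerivF]
  linear_combination coeffF_succ n / 4

lemma mul_one_sub_mul_derivF {x : ℝ} (hx : |x| < 1) :
    x * (1 - x) * derivF x = ∑' n, coeffWeightedDerivF n * x ^ n := by
  have hnc : GrowthBound (fun n ↦ n * coeffF n) 1 1 := fun n ↦ by
    simpa [abs_of_pos (coeffF_pos n)] using
      mul_le_mul (by linarith : (n : ℝ) ≤ n + 1) (coeffF_le_one n) (coeffF_pos n).le (by positivity)
  have hx_derivF : ∑' n, n * coeffF n * x ^ n = x * derivF x := by
    rw [hnc.tsum_mul_pow_eq_mul_tsum (by simp) hx, derivF]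
    simp [derivCoeff]
  rw [growthBound_coeffWeightedDerivF.tsum_mul_pow_eq_mul_tsum rfl hx]
  simp only [coeffWeightedDerivF, sub_mul]
  rw [Summable.tsum_sub ((growthBound_derivCoeff growthBound_coeffF).summable_mul_pow hx)
    (hnc.summable_mul_pow hx), hx_derivF, derivF]
  ring

/-- The hypergeometric equation `x(1-x)F'' + (1-2x)F' = F/4`, in self-adjoint form. -/
lemma hasDerivAt_mul_one_sub_mul_derivF {x : ℝ} (hx : |x| < 1) :
    HasDerivAt (fun y ↦ y * (1 - y) * derivF y) (F x / 4) x := by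
  have h := growthBound_coeffWeightedDerivF.hasDerivAt_tsum_mul_pow hx
  simp only [derivCoeff_coeffWeightedDerivF, div_mul_eq_mul_div, tsum_div_const] at h
  refine h.congr_of_eventuallyEq ?_
  filter_upwards [(isOpen_lt continuous_abs continuous_const).mem_nhds hx] with y hy
  exact mul_one_sub_mul_derivF hy

lemma F_zero : F 0 = 1 := by
  rw [F_eq_tsum, tsum_eq_single 0 fun n hn ↦ by simp [hn]]
  simp [coeffF]

lemma strictMonoOn_F : StrictMonoOn F (Ico 0 1) := by
  intro x hx y hy hxy
  rw [F_eq_tsum, F_eq_tsum]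
  refine Summable.tsum_lt_tsum (i := 1) (fun n ↦ ?_) ?_
    (growthBound_coeffF.summable_mul_pow (abs_lt_one_of_mem_Ico hx))
    (growthBound_coeffF.summable_mul_pow (abs_lt_one_of_mem_Ico hy))
  · exact mul_le_mul_of_nonneg_left (pow_le_pow_left₀ hx.1 hxy.le n) (coeffF_pos n).le
  · simpa only [pow_one] using mul_lt_mul_of_pos_left hxy (coeffF_pos 1)

lemma one_le_F {x : ℝ} (hx : x ∈ Ico 0 1) : 1 ≤ F x :=
  F_zero ▸ strictMonoOn_F.monotoneOn ⟨le_rfl, one_pos⟩ hx hx.1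

lemma hasDerivAt_mul_wronskian_eq_zero {f g f' g' w q : ℝ → ℝ} {x : ℝ}
    (hf : HasDerivAt f (f' x) x) (hg : HasDerivAt g (g' x) x)
    (hwf : HasDerivAt (fun y ↦ w y * f' y) (q x * f x) x)
    (hwg : HasDerivAt (fun y ↦ w y * g' y) (q x * g x) x) :
    HasDerivAt (fun y ↦ w y * (f y * g' y - f' y * g y)) 0 x := by
  -- `w (f g' - f' g) = f (w g') - g (w f')`, and the two `q f g` terms cancel
  refine (((hf.fun_mul hwg).fun_sub (hg.fun_mul hwf)).congr_deriv (by ring)).congr_of_eventuallyEq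
    (.of_forall fun y ↦ by ring)

lemma eq_of_continuousOn_of_hasDerivAt_zero {f : ℝ → ℝ} {a b : ℝ} (hab : a ≤ b)
    (hcont : ContinuousOn f (Icc a b)) (hderiv : ∀ x ∈ Ioo a b, HasDerivAt f 0 x) :
    f b = f a := by
  rcases hab.eq_or_lt with rfl | hlt
  · rfl
  obtain ⟨c, -, hc⟩ := exists_hasDerivAt_eq_slope f (fun _ ↦ 0) hlt hcont hderiv
  rw [eq_comm, div_eq_zero_iff, sub_eq_zero] at hc
  exact hc.resolve_right (sub_ne_zero.2 hlt.ne')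

namespace Cubic

variable {p : ℝ}

noncomputable def alpha (p : ℝ) : ℝ := p * (2 + p) ^ 3 / (1 + 2 * p) ^ 3
noncomputable def beta (p : ℝ) : ℝ := p ^ 3 * (2 + p) / (1 + 2 * p)
/-- `weight * alpha' = 2 * alpha * (1 - alpha)`, so that `weight * (F ∘ alpha)'` is
`2 * (x (1 - x) F') ∘ alpha`. -/
noncomputable def weight (p : ℝ) : ℝ := p * (1 - p) * (1 + p) * (2 + p) / (1 + 2 * p) ^ 2

noncomputable def alpha' (p : ℝ) : ℝ := 2 * (1 - p) ^ 2 * (2 + p) ^ 2 / (1 + 2 * p) ^ 4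
noncomputable def beta' (p : ℝ) : ℝ := 6 * p ^ 2 * (1 + p) ^ 2 / (1 + 2 * p) ^ 2
noncomputable def weight' (p : ℝ) : ℝ :=
  2 * (1 - p - 3 * p ^ 2 - 4 * p ^ 3 - 2 * p ^ 4) / (1 + 2 * p) ^ 3

lemma hasDerivAt_alpha (hp : 1 + 2 * p ≠ 0) : HasDerivAt alpha (alpha' p) p := by
  have h := ((hasDerivAt_id' p).fun_mul (((hasDerivAt_id' p).const_add 2).fun_pow 3)).fun_div
    ((((hasDerivAt_id' p).const_mul 2).const_add 1).fun_pow 3) (pow_ne_zero 3 hp)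
  refine h.congr_deriv ?_
  simp only [alpha']; field_simp; ring

lemma hasDerivAt_beta (hp : 1 + 2 * p ≠ 0) : HasDerivAt beta (beta' p) p := by
  have h := (((hasDerivAt_id' p).fun_pow 3).fun_mul ((hasDerivAt_id' p).const_add 2)).fun_div
    (((hasDerivAt_id' p).const_mul 2).const_add 1) hp
  refine h.congr_deriv ?_
  simp only [beta']; field_simp; ring

lemma hasDerivAt_weight (hp : 1 + 2 * p ≠ 0) : HasDerivAt weight (weight' p) p := by
  have h := ((((hasDerivAt_id' p).fun_mul ((hasDerivAt_id' p).const_sub 1)).fun_mul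
    ((hasDerivAt_id' p).const_add 1)).fun_mul ((hasDerivAt_id' p).const_add 2)).fun_div
    ((((hasDerivAt_id' p).const_mul 2).const_add 1).fun_pow 2) (pow_ne_zero 2 hp)
  refine h.congr_deriv ?_
  rw [weight', div_eq_div_iff (by positivity) (pow_ne_zero 3 hp)]
  ring

lemma alpha_mem_Ico (hp : p ∈ Ico 0 1) : alpha p ∈ Ico 0 1 := by
  obtain ⟨hp0, hp1⟩ := hp
  refine ⟨by unfold alpha; positivity, ?_⟩
  rw [alpha, div_lt_one (by positivity)]
  nlinarith [mul_pos (pow_pos (sub_pos.2 hp1) 3) (by linarith : (0 : ℝ) < 1 + p)]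

lemma beta_mem_Ico (hp : p ∈ Ico 0 1) : beta p ∈ Ico 0 1 := by
  obtain ⟨hp0, hp1⟩ := hp
  refine ⟨by unfold beta; positivity, ?_⟩
  rw [beta, div_lt_one (by positivity)]
  nlinarith [mul_pos (sub_pos.2 hp1) (pow_pos (by linarith : (0 : ℝ) < 1 + p) 3)]

noncomputable def f (p : ℝ) : ℝ := F (alpha p)
noncomputable def g (p : ℝ) : ℝ := (1 + 2 * p) * F (beta p)
noncomputable def f' (p : ℝ) : ℝ := derivF (alpha p) * alpha' p
noncomputable def g' (p : ℝ) : ℝ := 2 * F (beta p) + (1 + 2 * p) * (derivF (beta p) * beta' p)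

lemma one_add_two_mul_ne_zero (hp : p ∈ Ico 0 1) : 1 + 2 * p ≠ 0 := by
  linarith [hp.1]

lemma hasDerivAt_f (hp : p ∈ Ico 0 1) : HasDerivAt f (f' p) p :=
  (hasDerivAt_F (abs_lt_one_of_mem_Ico (alpha_mem_Ico hp))).comp p
    (hasDerivAt_alpha (one_add_two_mul_ne_zero hp))

lemma hasDerivAt_g (hp : p ∈ Ico 0 1) : HasDerivAt g (g' p) p := by
  have h := (((hasDerivAt_id' p).const_mul 2).const_add 1).fun_mul
    ((hasDerivAt_F (abs_lt_one_of_mem_Ico (beta_mem_Ico hp))).comp p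
      (hasDerivAt_beta (one_add_two_mul_ne_zero hp)))
  exact h.congr_deriv (by simp only [g', Function.comp_apply]; ring)

lemma eventually_one_add_two_mul_ne_zero (hp : p ∈ Ico 0 1) :
    ∀ᶠ y in 𝓝 p, 1 + 2 * y ≠ 0 := by
  filter_upwards [Ioi_mem_nhds (show -1 / 2 < p by linarith [hp.1])] with y hy
  linarith [mem_Ioi.1 hy]

lemma hasDerivAt_weight_mul_f' (hp : p ∈ Ico 0 1) :
    HasDerivAt (fun y ↦ weight y * f' y) (alpha' p / 2 * f p) p := by
  have h := ((hasDerivAt_mul_one_sub_mul_derivF (abs_lt_one_of_mem_Ico (alpha_mem_Ico hp))).comp p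
    (hasDerivAt_alpha (one_add_two_mul_ne_zero hp))).const_mul 2
  refine (h.congr_deriv (by simp only [f]; ring)).congr_of_eventuallyEq ?_
  filter_upwards [eventually_one_add_two_mul_ne_zero hp] with y hy
  simp only [Function.comp_apply, f']
  generalize derivF (alpha y) = B
  simp only [weight, alpha, alpha']
  rw [one_sub_div (pow_ne_zero 3 hy)]
  field_simp
  ring

lemma hasDerivAt_weight_mul_g' (hp : p ∈ Ico 0 1) :
    HasDerivAt (fun y ↦ weight y * g' y) (alpha' p / 2 * g p) p := by
  have hp2 := one_add_two_mul_ne_zero hp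
  have hβ := abs_lt_one_of_mem_Ico (beta_mem_Ico hp)
  have h := (((hasDerivAt_weight hp2).const_mul 2).fun_mul
      ((hasDerivAt_F hβ).comp p (hasDerivAt_beta hp2))).fun_add
    ((((((hasDerivAt_id' p).const_mul 2).const_add 1).fun_inv hp2).const_mul 6).fun_mul
      ((hasDerivAt_mul_one_sub_mul_derivF hβ).comp p (hasDerivAt_beta hp2)))
  refine (h.congr_deriv ?_).congr_of_eventuallyEq ?_
  · simp only [g, Function.comp_apply]
    generalize F (beta p) = A
    generalize derivF (beta p) = B
    simp only [weight, weight', alpha', beta, beta']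
    field_simp
    ring
  · filter_upwards [eventually_one_add_two_mul_ne_zero hp] with y hy
    simp only [Function.comp_apply, g']
    generalize F (beta y) = A
    generalize derivF (beta y) = B
    simp only [weight, beta, beta']
    -- `field_simp` cancels with the denominator normalised to this form
    have hy' : 1 + y * 2 ≠ 0 := by rwa [mul_comm 2 y] at hy
    field_simp
    ring

lemma weight_pos (hp : p ∈ Ioo 0 1) : 0 < weight p := by
  obtain ⟨hp0, hp1⟩ := hp
  have : 0 < 1 - p := sub_pos.2 hp1
  unfold weight
  positivity

lemma g_pos (hp : p ∈ Ico 0 1) : 0 < g p :=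
  mul_pos (by linarith [hp.1]) (one_pos.trans_le (one_le_F (beta_mem_Ico hp)))

lemma weight_mul_wronskian_eq_zero (hp : p ∈ Ico 0 1) :
    weight p * (f p * g' p - f' p * g p) = 0 := by
  have hderiv : ∀ x ∈ Ico (0 : ℝ) 1,
      HasDerivAt (fun y ↦ weight y * (f y * g' y - f' y * g y)) 0 x := fun x hx ↦
    hasDerivAt_mul_wronskian_eq_zero (q := fun y ↦ alpha' y / 2) (hasDerivAt_f hx) (hasDerivAt_g hx)
      (hasDerivAt_weight_mul_f' hx) (hasDerivAt_weight_mul_g' hx)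
  have hsub : Icc 0 p ⊆ Ico 0 1 := Icc_subset_Ico_right hp.2
  have h := eq_of_continuousOn_of_hasDerivAt_zero hp.1
    (fun x hx ↦ (hderiv x (hsub hx)).continuousAt.continuousWithinAt)
    (fun x hx ↦ hderiv x (hsub (Ioo_subset_Icc_self hx)))
  simpa [weight] using h

lemma f_eq_g (hp : p ∈ Ico 0 1) : f p = g p := by
  have hderiv : ∀ x ∈ Ico (0 : ℝ) 1,
      HasDerivAt (fun y ↦ f y / g y) ((f' x * g x - f x * g' x) / g x ^ 2) x := fun x hx ↦
    (hasDerivAt_f hx).div (hasDerivAt_g hx) (g_pos hx).ne'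
  have hsub : Icc 0 p ⊆ Ico 0 1 := Icc_subset_Ico_right hp.2
  have h := eq_of_continuousOn_of_hasDerivAt_zero hp.1
    (fun x hx ↦ (hderiv x (hsub hx)).continuousAt.continuousWithinAt)
    (fun x hx ↦ ?_)
  · have hfg0 : f 0 / g 0 = 1 := by
      simp [f, g, alpha, beta, (zero_lt_one.trans_le (one_le_F ⟨le_rfl, one_pos⟩)).ne']
    rwa [hfg0, div_eq_one_iff_eq (g_pos hp).ne'] at h
  · have hx' : x ∈ Ico 0 1 := hsub (Ioo_subset_Icc_self hx)
    have hW := weight_mul_wronskian_eq_zero hx'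
    rw [mul_eq_zero, or_iff_right (weight_pos ⟨hx.1, hx'.2⟩).ne'] at hW
    convert hderiv x hx' using 1
    rw [← neg_sub, hW, neg_zero, zero_div]

end Cubic

theorem F_cubic_transformation {p : ℝ} (hp : p ∈ Ico 0 1) :
    F (p * (2 + p) ^ 3 / (1 + 2 * p) ^ 3) = (1 + 2 * p) * F (p ^ 3 * (2 + p) / (1 + 2 * p)) :=
  Cubic.f_eq_g hp

lemma F_one_sub_eq_sqrt_three_mul :
    F (1 - (2 - √3) / 4) = √3 * F ((2 - √3) / 4) := by
  set s := √3
  have hs2 : s ^ 2 = 3 := Real.sq_sqrt (by norm_num)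
  have hs1 : 1 < s := by nlinarith [Real.sqrt_nonneg 3]
  have hs3 : s < 3 := by nlinarith
  have hp : (s - 1) / 2 ∈ Ico 0 1 := ⟨by linarith, by linarith⟩
  have h := F_cubic_transformation hp
  have hα : (s - 1) / 2 * (2 + (s - 1) / 2) ^ 3 / (1 + 2 * ((s - 1) / 2)) ^ 3
      = 1 - (2 - s) / 4 := by
    rw [div_eq_iff (by positivity)]
    linear_combination (-3 / 16 * (s ^ 2 - 3)) * hs2
  have hβ : ((s - 1) / 2) ^ 3 * (2 + (s - 1) / 2) / (1 + 2 * ((s - 1) / 2)) = (2 - s) / 4 := by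
    rw [div_eq_iff (by positivity)]
    linear_combination ((s ^ 2 + 1) / 16) * hs2
  rwa [hα, hβ, show 1 + 2 * ((s - 1) / 2) = s by ring] at h

lemma strictAntiOn_F_one_sub_sub_mul_F {c : ℝ} (hc : 0 < c) :
    StrictAntiOn (fun x ↦ F (1 - x) - c * F x) (Ioo 0 1) := by
  intro x hx y hy hxy
  have h1 : F (1 - y) < F (1 - x) :=
    strictMonoOn_F ⟨by linarith [hy.2], by linarith [hy.1]⟩ ⟨by linarith [hx.2], by linarith [hx.1]⟩
      (by linarith)
  have h2 : F x < F y := strictMonoOn_F ⟨hx.1.le, hx.2⟩ ⟨hy.1.le, hy.2⟩ hxy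
  linarith [mul_lt_mul_of_pos_left h2 hc]

theorem singular_modulus_three (α : ℝ) (h0 : 0 < α) (h1 : α < 1)
    (h : F (1 - α) = Real.sqrt 3 * F α) :
    α = (2 - Real.sqrt 3) / 4 := by
  have hs1 : 1 < √3 := by rw [Real.lt_sqrt zero_le_one]; norm_num
  have hs2 : √3 < 2 := by rw [Real.sqrt_lt' two_pos]; norm_num
  refine (strictAntiOn_F_one_sub_sub_mul_F (by positivity : 0 < √3)).injOn ⟨h0, h1⟩
    ⟨by linarith, by linarith⟩ ?_
  simp only [h, F_one_sub_eq_sqrt_three_mul, sub_self]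
end

section
/- Alternate 'very curious algebraical lemma' (AVCAL): let a, b, c, d be real numbers with a ≥ 0, b ≥ 1, c ≥ 1, d ≥ 1. Define α := (√(ab) + √((a+1)(b−1)))² and β := (√(cd) + √((c−1)(d−1)))², and set x₁ := (√(a+1) − √a)(√b − √(b−1))(√c − √(c−1))(√d − √(d−1)) and x₂ := −(√(a+1) + √a)(√b + √(b−1))(√c + √(c−1))(√d + √(d−1)). Then both x₁ and x₂ satisfy the equation 1/x − x = 2·(√(αβ) + √((α+1)(β−1))). -/
theorem alternate_very_curious_algebraical_lemma
    (a b c d : ℝ) (ha : 0 ≤ a) (hb : 1 ≤ b) (hc : 1 ≤ c) (hd : 1 ≤ d)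
    (α β x₁ x₂ : ℝ)
    (hα : α = (Real.sqrt (a * b) + Real.sqrt ((a + 1) * (b - 1))) ^ 2)
    (hβ : β = (Real.sqrt (c * d) + Real.sqrt ((c - 1) * (d - 1))) ^ 2)
    (hx₁ : x₁ = (Real.sqrt (a + 1) - Real.sqrt a) * (Real.sqrt b - Real.sqrt (b - 1)) *
        (Real.sqrt c - Real.sqrt (c - 1)) * (Real.sqrt d - Real.sqrt (d - 1)))
    (hx₂ : x₂ = -((Real.sqrt (a + 1) + Real.sqrt a) * (Real.sqrt b + Real.sqrt (b - 1)) *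
        (Real.sqrt c + Real.sqrt (c - 1)) * (Real.sqrt d + Real.sqrt (d - 1)))) :
    1 / x₁ - x₁ = 2 * (Real.sqrt (α * β) + Real.sqrt ((α + 1) * (β - 1))) ∧
    1 / x₂ - x₂ = 2 * (Real.sqrt (α * β) + Real.sqrt ((α + 1) * (β - 1))) := by
  set p := Real.sqrt (a + 1) with hpd
  set q := Real.sqrt a with hqd
  set r := Real.sqrt b with hrd
  set s := Real.sqrt (b - 1) with hsd
  set t := Real.sqrt c with htd
  set u := Real.sqrt (c - 1) with hud
  set v := Real.sqrt d with hvd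
  set w := Real.sqrt (d - 1) with hwd
  have hp : p ^ 2 = a + 1 := Real.sq_sqrt (by linarith)
  have hq : q ^ 2 = a := Real.sq_sqrt ha
  have hr : r ^ 2 = b := Real.sq_sqrt (by linarith)
  have hs : s ^ 2 = b - 1 := Real.sq_sqrt (by linarith)
  have ht : t ^ 2 = c := Real.sq_sqrt (by linarith)
  have hu : u ^ 2 = c - 1 := Real.sq_sqrt (by linarith)
  have hv : v ^ 2 = d := Real.sq_sqrt (by linarith)
  have hw : w ^ 2 = d - 1 := Real.sq_sqrt (by linarith)
  have hp0 : 0 ≤ p := Real.sqrt_nonneg _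
  have hq0 : 0 ≤ q := Real.sqrt_nonneg _
  have hr0 : 0 ≤ r := Real.sqrt_nonneg _
  have hs0 : 0 ≤ s := Real.sqrt_nonneg _
  have ht0 : 0 ≤ t := Real.sqrt_nonneg _
  have hu0 : 0 ≤ u := Real.sqrt_nonneg _
  have hv0 : 0 ≤ v := Real.sqrt_nonneg _
  have hw0 : 0 ≤ w := Real.sqrt_nonneg _
  have e1 : p ^ 2 - q ^ 2 = 1 := by rw [hp, hq]; ring
  have e2 : r ^ 2 - s ^ 2 = 1 := by rw [hr, hs]; ring
  have e3 : t ^ 2 - u ^ 2 = 1 := by rw [ht, hu]; ring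
  have e4 : v ^ 2 - w ^ 2 = 1 := by rw [hv, hw]; ring
  -- rewrite α, β in terms of p..w
  have hα' : α = (q * r + p * s) ^ 2 := by
    rw [hα, Real.sqrt_mul ha, Real.sqrt_mul (by linarith : (0:ℝ) ≤ a + 1)]
  have hβ' : β = (t * v + u * w) ^ 2 := by
    rw [hβ, Real.sqrt_mul (by linarith : (0:ℝ) ≤ c), Real.sqrt_mul (by linarith : (0:ℝ) ≤ c - 1)]
  have hA1 : α + 1 = (p * r + q * s) ^ 2 := by
    rw [hα']; linear_combination (-(r ^ 2 - s ^ 2)) * e1 - e2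
  have hB1 : β - 1 = (u * v + t * w) ^ 2 := by
    rw [hβ']; linear_combination (v ^ 2 - w ^ 2) * e3 + e4
  have hsab : Real.sqrt (α * β) = (q * r + p * s) * (t * v + u * w) := by
    rw [hα', hβ', ← mul_pow, Real.sqrt_sq (by positivity)]
  have hsab2 : Real.sqrt ((α + 1) * (β - 1)) = (p * r + q * s) * (u * v + t * w) := by
    rw [hA1, hB1, ← mul_pow, Real.sqrt_sq (by positivity)]
  -- inverses
  have hmul : x₁ * ((p + q) * (r + s) * (t + u) * (v + w)) = 1 := by
    rw [hx₁]; linear_combination ((r ^ 2 - s ^ 2) * (t ^ 2 - u ^ 2) * (v ^ 2 - w ^ 2)) * e1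
      + ((t ^ 2 - u ^ 2) * (v ^ 2 - w ^ 2)) * e2 + (v ^ 2 - w ^ 2) * e3 + e4
  have hinv1 : 1 / x₁ = (p + q) * (r + s) * (t + u) * (v + w) :=
    (eq_one_div_of_mul_eq_one_left (by linarith [mul_comm x₁ ((p + q) * (r + s) * (t + u) * (v + w))] : ((p + q) * (r + s) * (t + u) * (v + w)) * x₁ = 1)).symm
  have hmul2 : x₂ * (-((p - q) * (r - s) * (t - u) * (v - w))) = 1 := by
    rw [hx₂]; linear_combination ((r ^ 2 - s ^ 2) * (t ^ 2 - u ^ 2) * (v ^ 2 - w ^ 2)) * e1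
      + ((t ^ 2 - u ^ 2) * (v ^ 2 - w ^ 2)) * e2 + (v ^ 2 - w ^ 2) * e3 + e4
  have hinv2 : 1 / x₂ = -((p - q) * (r - s) * (t - u) * (v - w)) :=
    (eq_one_div_of_mul_eq_one_left (by linarith [mul_comm x₂ (-((p - q) * (r - s) * (t - u) * (v - w)))] : (-((p - q) * (r - s) * (t - u) * (v - w))) * x₂ = 1)).symm
  constructor
  · rw [hinv1, hx₁, hsab, hsab2]; ring
  · rw [hinv2, hx₂, hsab, hsab2]; ring
end
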